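/- On the Lie algebra 𝔛(S¹) with bracket [X,Y] = X'Y − XY' and L² inner product, the curvature operator satisfies R(X,Y)Z = −X''YZ + XY''Z − 2X'YZ' + 2XY'Z' = −2[X,Y]Z' − [X,Y]'Z, and consequently the (unnormalized) sectional curvature is ⟨−R(X,Y)X, Y⟩ = ‖[X,Y]‖²_{L²} ≥ 0. -/

import Mathlib

/-- The bracket `[X,Y] = X'Y − XY'` of vector fields on the circle. -/
noncomputable def vfBracket (X Y : ℝ → ℝ) : ℝ → ℝ :=
  fun x => deriv X x * Y x - X x * deriv Y x

/-- The curvature operator of the right invariant `L²` metric on `Diff(S¹)`,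
`R(X,Y)Z = −X''YZ + XY''Z − 2X'YZ' + 2XY'Z'`. -/
noncomputable def curvOp (X Y Z : ℝ → ℝ) (x : ℝ) : ℝ :=
  -(iteratedDeriv 2 X x) * Y x * Z x + X x * iteratedDeriv 2 Y x * Z x
    - 2 * deriv X x * Y x * deriv Z x + 2 * X x * deriv Y x * deriv Z x

/-- On `𝔛(S¹)` with bracket `[X,Y] = X'Y − XY'` and `L²` inner product, the curvature
operator satisfies `R(X,Y)Z = −2[X,Y]Z' − [X,Y]'Z`, and the unnormalized sectional
curvature is `⟨−R(X,Y)X, Y⟩ = ‖[X,Y]‖²_{L²} ≥ 0`. -/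
theorem curvature_L2_circle (X Y Z : ℝ → ℝ)
    (hX : ContDiff ℝ (⊤ : ℕ∞) X) (hY : ContDiff ℝ (⊤ : ℕ∞) Y) (hZ : ContDiff ℝ (⊤ : ℕ∞) Z)
    (hXp : Function.Periodic X (2 * Real.pi)) (hYp : Function.Periodic Y (2 * Real.pi))
    (hZp : Function.Periodic Z (2 * Real.pi)) :
    (∀ x, curvOp X Y Z x
        = -2 * vfBracket X Y x * deriv Z x - deriv (vfBracket X Y) x * Z x) ∧
    (∫ x in (0:ℝ)..(2 * Real.pi), -(curvOp X Y X x) * Y x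
        = ∫ x in (0:ℝ)..(2 * Real.pi), (vfBracket X Y x) ^ 2) ∧
    (0 ≤ ∫ x in (0:ℝ)..(2 * Real.pi), -(curvOp X Y X x) * Y x) := by
  have hX' : ContDiff ℝ (⊤ : ℕ∞) X := hX.of_le (by simp)
  have hY' : ContDiff ℝ (⊤ : ℕ∞) Y := hY.of_le (by simp)
  have hX1 : Differentiable ℝ X := hX'.differentiable (by simp)
  have hY1 : Differentiable ℝ Y := hY'.differentiable (by simp)
  have hXd : ContDiff ℝ (⊤ : ℕ∞) (deriv X) := (contDiff_infty_iff_deriv.mp hX').2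
  have hYd : ContDiff ℝ (⊤ : ℕ∞) (deriv Y) := (contDiff_infty_iff_deriv.mp hY').2
  have hX2 : Differentiable ℝ (deriv X) := hXd.differentiable (by simp)
  have hY2 : Differentiable ℝ (deriv Y) := hYd.differentiable (by simp)
  have hXdd : ContDiff ℝ (⊤ : ℕ∞) (deriv (deriv X)) := (contDiff_infty_iff_deriv.mp hXd).2
  have hYdd : ContDiff ℝ (⊤ : ℕ∞) (deriv (deriv Y)) := (contDiff_infty_iff_deriv.mp hYd).2
  have h2X : iteratedDeriv 2 X = deriv (deriv X) := by
    funext t; rw [iteratedDeriv_succ, iteratedDeriv_one]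
  have h2Y : iteratedDeriv 2 Y = deriv (deriv Y) := by
    funext t; rw [iteratedDeriv_succ, iteratedDeriv_one]
  have hbr : ∀ x, deriv (vfBracket X Y) x
      = deriv (deriv X) x * Y x - X x * deriv (deriv Y) x := by
    intro x
    have h1 : HasDerivAt (vfBracket X Y)
        ((deriv (deriv X) x * Y x + deriv X x * deriv Y x)
          - (deriv X x * deriv Y x + X x * deriv (deriv Y) x)) x :=
      ((hX2 x).hasDerivAt.mul (hY1 x).hasDerivAt).sub
        ((hX1 x).hasDerivAt.mul (hY2 x).hasDerivAt)
    rw [h1.deriv]; ring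
  have hf_cont : Continuous (fun x => -(curvOp X Y X x) * Y x) := by
    unfold curvOp
    rw [h2X, h2Y]
    have c1 := hX'.continuous
    have c2 := hY'.continuous
    have c3 := hXd.continuous
    have c4 := hYd.continuous
    have c5 := hXdd.continuous
    have c6 := hYdd.continuous
    exact (((((c5.neg.mul c2).mul c1).add ((c1.mul c6).mul c1)).sub
      (((continuous_const.mul c3).mul c2).mul c3)).add
      (((continuous_const.mul c1).mul c4).mul c3)).neg.mul c2
  have hsq_cont : Continuous (fun x => (vfBracket X Y x) ^ 2) := by
    unfold vfBracket
    exact ((hXd.continuous.mul hY'.continuous).sub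
      (hX'.continuous.mul hYd.continuous)).pow 2
  have key : ∀ x, HasDerivAt (fun t => X t * deriv X t * (Y t) ^ 2 - (X t) ^ 2 * (Y t * deriv Y t))
      ((-(curvOp X Y X x)) * Y x - (vfBracket X Y x) ^ 2) x := by
    intro x
    have h1 := (((hX1 x).hasDerivAt.mul (hX2 x).hasDerivAt).mul
        ((hY1 x).hasDerivAt.pow 2)).sub
      (((hX1 x).hasDerivAt.pow 2).mul ((hY1 x).hasDerivAt.mul (hY2 x).hasDerivAt))
    refine h1.congr_deriv ?_
    simp only [curvOp, vfBracket, h2X, h2Y, Pi.mul_apply, Pi.pow_apply]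
    push_cast
    ring
  have hfi : IntervalIntegrable (fun x => -(curvOp X Y X x) * Y x)
      MeasureTheory.volume 0 (2 * Real.pi) := hf_cont.intervalIntegrable _ _
  have hsi : IntervalIntegrable (fun x => (vfBracket X Y x) ^ 2)
      MeasureTheory.volume 0 (2 * Real.pi) := hsq_cont.intervalIntegrable _ _
  have hzero : ∫ x in (0:ℝ)..(2 * Real.pi),
      ((-(curvOp X Y X x)) * Y x - (vfBracket X Y x) ^ 2) = 0 := by
    rw [intervalIntegral.integral_eq_sub_of_hasDerivAt (fun x _ => key x)
      ((hf_cont.sub hsq_cont).intervalIntegrable _ _)]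
    have e1 : X (2 * Real.pi) = X 0 := by simpa using hXp 0
    have e2 : Y (2 * Real.pi) = Y 0 := by simpa using hYp 0
    have e3 : deriv X (2 * Real.pi) = deriv X 0 := by
      have h := deriv_comp_add_const X (2 * Real.pi) (x := (0 : ℝ))
      have hfe : (fun t => X (t + 2 * Real.pi)) = X := funext fun t => hXp t
      rw [hfe] at h
      simpa using h.symm
    have e4 : deriv Y (2 * Real.pi) = deriv Y 0 := by
      have h := deriv_comp_add_const Y (2 * Real.pi) (x := (0 : ℝ))
      have hfe : (fun t => Y (t + 2 * Real.pi)) = Y := funext fun t => hYp t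
      rw [hfe] at h
      simpa using h.symm
    simp [e1, e2, e3, e4]
  have heq : (∫ x in (0:ℝ)..(2 * Real.pi), -(curvOp X Y X x) * Y x)
      = ∫ x in (0:ℝ)..(2 * Real.pi), (vfBracket X Y x) ^ 2 := by
    rw [intervalIntegral.integral_sub hfi hsi] at hzero
    linarith
  refine ⟨?_, heq, ?_⟩
  · intro x
    simp only [curvOp, vfBracket, hbr x, h2X, h2Y]
    ring
  · rw [heq]
    apply intervalIntegral.integral_nonneg (by positivity)
    intro u _
    positivity
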